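/- For the lazy projection algorithm with constant step a > 0 on a σ-strongly convex F with L-bounded subgradients, combining the regret bound with strong convexity yields: if E = F(w(1)) - F(w*) then (1/T)∑_{t=1}^T [F(w(t)) - F(w*)] ≤ E/(σ a T) + aL²/2. -/

import Mathlib

/-!
Lazy projection is follow-the-regularized-leader for the objective
`u ↦ a ⟪g 1 + ⋯ + g t, u⟫ + ‖u - w 1‖² / 2`, which is `1`-strongly convex on `W`. The
"be the leader" argument, together with the stability bound
`⟪g t, w t - w (t + 1)⟫ ≤ a ‖g t‖² / 2 + ‖w t - w (t + 1)‖² / (2 a)`, gives the regret bound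
`∑ ⟪g t, w t - u⟫ ≤ ‖u - w 1‖² / (2 a) + (a / 2) ∑ ‖g t‖²`. Take `u = w*`: convexity bounds
`F (w t) - F w*` by `⟪g t, w t - w*⟫`, and strong convexity at the minimizer gives
`‖w 1 - w*‖² ≤ 2 (F (w 1) - F w*) / σ`.
-/

open RealInnerProductSpace Finset

open Filter Topology

variable {E : Type*} [NormedAddCommGroup E] [InnerProductSpace ℝ E]

theorem UniformConvexOn.apply_norm_sub_le_sub_of_isMinOn {s : Set E} {φ : ℝ → ℝ} {f : E → ℝ}
    (hf : UniformConvexOn s φ f) {x y : E} (hx : x ∈ s) (hy : y ∈ s) (hmin : IsMinOn f s y) :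
    φ ‖x - y‖ ≤ f x - f y := by
  have hdamped : ∀ θ ∈ Set.Ioc (0 : ℝ) 1, (1 - θ) * φ ‖x - y‖ ≤ f x - f y := by
    rintro θ ⟨hθ0, hθ1⟩
    have hmix := hf.2 hx hy hθ0.le (sub_nonneg.2 hθ1) (add_sub_cancel θ 1)
    have hge := isMinOn_iff.1 hmin _ (hf.1 hx hy hθ0.le (sub_nonneg.2 hθ1) (add_sub_cancel θ 1))
    rw [smul_eq_mul, smul_eq_mul] at hmix
    have : θ * ((1 - θ) * φ ‖x - y‖) ≤ θ * (f x - f y) := by linarith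
    exact le_of_mul_le_mul_left this hθ0
  have hlim : Tendsto (fun θ : ℝ => (1 - θ) * φ ‖x - y‖) (𝓝[>] 0) (𝓝 (φ ‖x - y‖)) := by
    refine tendsto_nhdsWithin_of_tendsto_nhds ((Continuous.tendsto' (by fun_prop) _ _ ?_))
    simp
  exact le_of_tendsto hlim (eventually_of_mem (Ioc_mem_nhdsGT one_pos) hdamped)

theorem norm_sub_sq_add_norm_sub_sq_le_of_isMinOn {W : Set E} (hW : Convex ℝ W) {x p u : E}
    (hp : p ∈ W) (hmin : IsMinOn (‖· - x‖) W p) (hu : u ∈ W) :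
    ‖p - x‖ ^ 2 + ‖u - p‖ ^ 2 ≤ ‖u - x‖ ^ 2 := by
  have hinf : ‖x - p‖ = ⨅ v : W, ‖x - v‖ := by
    have : Nonempty W := ⟨⟨p, hp⟩⟩
    refine le_antisymm (le_ciInf fun v => ?_) (ciInf_le ⟨0, ?_⟩ (⟨p, hp⟩ : W))
    · rw [norm_sub_rev, norm_sub_rev x]; exact isMinOn_iff.1 hmin v v.2
    · rintro _ ⟨v, rfl⟩; exact norm_nonneg _
  have hobtuse : ⟪x - p, u - p⟫ ≤ 0 := (norm_eq_iInf_iff_real_inner_le_zero hW hp).1 hinf u hu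
  have hsplit : u - x = (u - p) - (x - p) := by abel
  rw [hsplit, norm_sub_sq_real (u - p), norm_sub_rev p x, real_inner_comm]
  linarith

theorem two_mul_mul_real_inner_le (a : ℝ) (x y : E) :
    2 * a * ⟪x, y⟫ ≤ a ^ 2 * ‖x‖ ^ 2 + ‖y‖ ^ 2 := by
  have h := norm_sub_sq_real (a • x) y
  rw [norm_smul, real_inner_smul_left, mul_pow, Real.norm_eq_abs, sq_abs] at h
  nlinarith [sq_nonneg ‖a • x - y‖]

/-- `w 1 - a • ∑ s ∈ Icc 1 t, g s` is the unprojected iterate `z (t + 1)`; at `t = 0` the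
condition only says `w 1 ∈ W`. -/
def IsLazyProjection (W : Set E) (a : ℝ) (g w : ℕ → E) : Prop :=
  ∀ t, w (t + 1) ∈ W ∧ IsMinOn (‖· - (w 1 - a • ∑ s ∈ Icc 1 t, g s)‖) W (w (t + 1))

theorem isLazyProjection_of_proj {W : Set E} {a : ℝ} {proj : E → E}
    (hproj : ∀ x, proj x ∈ W ∧ ∀ u ∈ W, ‖proj x - x‖ ≤ ‖u - x‖) {z w g : ℕ → E}
    (hw1 : w 1 ∈ W) (hz1 : z 1 = w 1) (hz : ∀ t ≥ 1, z (t + 1) = z t - a • g t)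
    (hwp : ∀ t ≥ 1, w (t + 1) = proj (z (t + 1))) : IsLazyProjection W a g w := by
  have hzsum : ∀ t, z (t + 1) = w 1 - a • ∑ s ∈ Icc 1 t, g s := by
    intro t
    induction t with
    | zero => simp [hz1]
    | succ t ih => rw [hz (t + 1) (by omega), ih, sum_Icc_succ_top (by omega), smul_add, sub_sub]
  rintro (_ | t)
  · simpa using ⟨hw1, isMinOn_iff.2 fun u _ => by simp⟩
  · rw [← hzsum, hwp (t + 1) (by omega)]
    exact ⟨(hproj _).1, isMinOn_iff.2 (hproj _).2⟩

noncomputable def lazyPotential (a : ℝ) (g : ℕ → E) (w₁ : E) (t : ℕ) (u : E) : ℝ :=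
  a * ∑ s ∈ Icc 1 t, ⟪g s, u⟫ + ‖u - w₁‖ ^ 2 / 2

theorem lazyPotential_eq (a : ℝ) (g : ℕ → E) (w₁ : E) (t : ℕ) (u : E) :
    lazyPotential a g w₁ t u = ‖u - (w₁ - a • ∑ s ∈ Icc 1 t, g s)‖ ^ 2 / 2
      + (a * ⟪∑ s ∈ Icc 1 t, g s, w₁⟫ - a ^ 2 * ‖∑ s ∈ Icc 1 t, g s‖ ^ 2 / 2) := by
  set G := ∑ s ∈ Icc 1 t, g s
  have hsplit : u - (w₁ - a • G) = (u - w₁) + a • G := by abel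
  rw [lazyPotential, ← sum_inner, hsplit, norm_add_sq_real, norm_smul, mul_pow, Real.norm_eq_abs,
    sq_abs, real_inner_smul_right, inner_sub_left, real_inner_comm G u, real_inner_comm G w₁]
  ring

theorem lazyPotential_succ (a : ℝ) (g : ℕ → E) (w₁ : E) (t : ℕ) (u : E) :
    lazyPotential a g w₁ (t + 1) u = lazyPotential a g w₁ t u + a * ⟪g (t + 1), u⟫ := by
  rw [lazyPotential, lazyPotential, sum_Icc_succ_top (by omega)]
  ring

namespace IsLazyProjection

variable {W : Set E} {a : ℝ} {g w : ℕ → E}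

theorem mem (hw : IsLazyProjection W a g w) {t : ℕ} (ht : 1 ≤ t) : w t ∈ W := by
  obtain ⟨t, rfl⟩ := Nat.exists_eq_add_of_le' ht
  exact (hw t).1

theorem lazyPotential_add_le (hw : IsLazyProjection W a g w) (hW : Convex ℝ W) (t : ℕ) {u : E}
    (hu : u ∈ W) :
    lazyPotential a g (w 1) t (w (t + 1)) + ‖u - w (t + 1)‖ ^ 2 / 2
      ≤ lazyPotential a g (w 1) t u := by
  have hpyth := norm_sub_sq_add_norm_sub_sq_le_of_isMinOn hW (hw t).1 (hw t).2 hu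
  rw [lazyPotential_eq, lazyPotential_eq]
  linarith [sq_nonneg ‖w (t + 1) - (w 1 - a • ∑ s ∈ Icc 1 t, g s)‖]

/-- The "be the leader" inequality, with the strong-convexity gains `‖w t - w (t + 1)‖ ^ 2 / 2`
kept: they pay for the stability term in `regret_le`. -/
theorem sum_inner_add_le_lazyPotential (hw : IsLazyProjection W a g w) (hW : Convex ℝ W) (n : ℕ)
    {u : E} (hu : u ∈ W) :
    a * ∑ t ∈ Icc 1 n, ⟪g t, w (t + 1)⟫ + (∑ t ∈ Icc 1 n, ‖w t - w (t + 1)‖ ^ 2) / 2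
      + ‖u - w (n + 1)‖ ^ 2 / 2 ≤ lazyPotential a g (w 1) n u := by
  induction n generalizing u with
  | zero => simp [lazyPotential]
  | succ n ih =>
    have hprev := ih (hw.mem (by omega : 1 ≤ n + 1 + 1))
    have hstep := hw.lazyPotential_add_le hW (n + 1) hu
    rw [lazyPotential_succ] at hstep
    rw [norm_sub_rev] at hprev
    rw [sum_Icc_succ_top (by omega), sum_Icc_succ_top (by omega)]
    linarith

theorem regret_le (hw : IsLazyProjection W a g w) (hW : Convex ℝ W) (ha : 0 < a) (T : ℕ) {u : E}
    (hu : u ∈ W) :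
    ∑ t ∈ Icc 1 T, ⟪g t, w t - u⟫
      ≤ ‖u - w 1‖ ^ 2 / (2 * a) + a / 2 * ∑ t ∈ Icc 1 T, ‖g t‖ ^ 2 := by
  have hleader := hw.sum_inner_add_le_lazyPotential hW T hu
  have hstability : 2 * a * ∑ t ∈ Icc 1 T, ⟪g t, w t - w (t + 1)⟫
      ≤ a ^ 2 * ∑ t ∈ Icc 1 T, ‖g t‖ ^ 2 + ∑ t ∈ Icc 1 T, ‖w t - w (t + 1)‖ ^ 2 := by
    rw [mul_sum, mul_sum, ← sum_add_distrib]
    exact sum_le_sum fun t _ => two_mul_mul_real_inner_le a _ _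
  have hsplit : ∑ t ∈ Icc 1 T, ⟪g t, w t - u⟫ = ∑ t ∈ Icc 1 T, ⟪g t, w t - w (t + 1)⟫
      + ∑ t ∈ Icc 1 T, ⟪g t, w (t + 1)⟫ - ∑ t ∈ Icc 1 T, ⟪g t, u⟫ := by
    simp only [inner_sub_right, sum_sub_distrib]
    ring
  rw [lazyPotential] at hleader
  rw [hsplit, div_add' _ _ _ (by positivity), le_div_iff₀ (by positivity)]
  nlinarith [sq_nonneg ‖u - w (T + 1)‖]

end IsLazyProjection

theorem strongConvexOn_of_forall_Icc {s : Set E} (hs : Convex ℝ s) {m : ℝ} {f : E → ℝ}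
    (h : ∀ θ ∈ Set.Icc (0:ℝ) 1, ∀ u ∈ s, ∀ w ∈ s,
      f (θ • u + (1 - θ) • w) ≤ θ * f u + (1 - θ) * f w - m / 2 * θ * (1 - θ) * ‖u - w‖ ^ 2) :
    StrongConvexOn s m f := by
  refine ⟨hs, fun u hu w hw θ b hθ hb hθb => ?_⟩
  obtain rfl : b = 1 - θ := by linarith
  have := h θ ⟨hθ, by linarith⟩ u hu w hw
  simp only [smul_eq_mul]
  linarith

theorem stmt_19_general {d : ℕ} (σ a L : ℝ) (hσ : 0 < σ) (ha : 0 < a)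
    (W : Set (EuclideanSpace ℝ (Fin d))) (hW : Convex ℝ W)
    (F : EuclideanSpace ℝ (Fin d) → ℝ)
    (hsc : ∀ θ ∈ Set.Icc (0:ℝ) 1, ∀ u ∈ W, ∀ w ∈ W,
      F (θ • u + (1 - θ) • w) ≤ θ * F u + (1 - θ) * F w
        - σ / 2 * θ * (1 - θ) * ‖u - w‖ ^ 2)
    (wstar : EuclideanSpace ℝ (Fin d)) (hwstar : wstar ∈ W)
    (hmin : ∀ v ∈ W, F wstar ≤ F v)
    (proj : EuclideanSpace ℝ (Fin d) → EuclideanSpace ℝ (Fin d))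
    (hproj : ∀ x, proj x ∈ W ∧ ∀ u ∈ W, ‖proj x - x‖ ≤ ‖u - x‖)
    (T : ℕ) (hT : 0 < T)
    (z w g : ℕ → EuclideanSpace ℝ (Fin d))
    (hw1 : w 1 ∈ W) (hz1 : z 1 = w 1)
    (hz : ∀ t ≥ 1, z (t + 1) = z t - a • g t)
    (hwp : ∀ t ≥ 1, w (t + 1) = proj (z (t + 1)))
    (hsub : ∀ t ∈ Finset.Icc 1 T, ∀ v ∈ W, F (w t) + ⟪g t, v - w t⟫ ≤ F v)
    (hgL : ∀ t ∈ Finset.Icc 1 T, ‖g t‖ ≤ L) :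
    (1 / (T:ℝ)) * ∑ t ∈ Finset.Icc 1 T, (F (w t) - F wstar) ≤
      (F (w 1) - F wstar) / (σ * a * (T:ℝ)) + a * L ^ 2 / 2 := by
  have hlazy := isLazyProjection_of_proj hproj hw1 hz1 hz hwp
  have hinit : σ / 2 * ‖wstar - w 1‖ ^ 2 ≤ F (w 1) - F wstar := by
    rw [norm_sub_rev]
    exact (strongConvexOn_of_forall_Icc hW hsc).apply_norm_sub_le_sub_of_isMinOn hw1 hwstar
      (isMinOn_iff.2 hmin)
  have hgap : ∀ t ∈ Icc 1 T, F (w t) - F wstar ≤ ⟪g t, w t - wstar⟫ := fun t ht => by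
    have := hsub t ht wstar hwstar
    rw [← neg_sub, inner_neg_right] at this
    linarith
  have hgrad : ∑ t ∈ Icc 1 T, ‖g t‖ ^ 2 ≤ T * L ^ 2 := by
    simpa using sum_le_sum fun t ht => pow_le_pow_left₀ (norm_nonneg _) (hgL t ht) 2
  have hT' : (0 : ℝ) < T := by exact_mod_cast hT
  have hregret : ∑ t ∈ Icc 1 T, (F (w t) - F wstar)
      ≤ (F (w 1) - F wstar) / (σ * a) + T * (a * L ^ 2 / 2) := calc
    _ ≤ ∑ t ∈ Icc 1 T, ⟪g t, w t - wstar⟫ := sum_le_sum hgap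
    _ ≤ ‖wstar - w 1‖ ^ 2 / (2 * a) + a / 2 * ∑ t ∈ Icc 1 T, ‖g t‖ ^ 2 :=
      hlazy.regret_le hW ha T hwstar
    _ ≤ (F (w 1) - F wstar) / (σ * a) + T * (a * L ^ 2 / 2) := by
      gcongr ?_ + ?_
      · rw [div_le_div_iff₀ (by positivity) (by positivity)]
        nlinarith
      · nlinarith
  calc (1 / (T:ℝ)) * ∑ t ∈ Icc 1 T, (F (w t) - F wstar)
      ≤ 1 / T * ((F (w 1) - F wstar) / (σ * a) + T * (a * L ^ 2 / 2)) := by gcongr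
    _ = (F (w 1) - F wstar) / (σ * a * T) + a * L ^ 2 / 2 := by field_simp

/-- Lazy projection with constant step on a σ-strongly convex objective:
combining the regret bound with strong convexity gives
`(1/T) ∑ₜ [F(w(t)) - F(w*)] ≤ (F(w(1)) - F(w*))/(σ a T) + a L²/2`. -/
theorem stmt_19 {d : ℕ} (σ a L : ℝ) (hσ : 0 < σ) (ha : 0 < a) (hL : 0 ≤ L)
    (W : Set (EuclideanSpace ℝ (Fin d)))
    (hWne : W.Nonempty) (hWc : IsClosed W) (hW : Convex ℝ W)
    (F : EuclideanSpace ℝ (Fin d) → ℝ)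
    (hsc : ∀ θ ∈ Set.Icc (0:ℝ) 1, ∀ u ∈ W, ∀ w ∈ W,
      F (θ • u + (1 - θ) • w) ≤ θ * F u + (1 - θ) * F w
        - σ / 2 * θ * (1 - θ) * ‖u - w‖ ^ 2)
    (wstar : EuclideanSpace ℝ (Fin d)) (hwstar : wstar ∈ W)
    (hmin : ∀ v ∈ W, F wstar ≤ F v)
    (proj : EuclideanSpace ℝ (Fin d) → EuclideanSpace ℝ (Fin d))
    (hproj : ∀ x, proj x ∈ W ∧ ∀ u ∈ W, ‖proj x - x‖ ≤ ‖u - x‖)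
    (T : ℕ) (hT : 0 < T)
    (z w g : ℕ → EuclideanSpace ℝ (Fin d))
    (hw1 : w 1 ∈ W) (hz1 : z 1 = w 1)
    (hz : ∀ t ≥ 1, z (t + 1) = z t - a • g t)
    (hwp : ∀ t ≥ 1, w (t + 1) = proj (z (t + 1)))
    (hsub : ∀ t ∈ Finset.Icc 1 T, ∀ v ∈ W, F (w t) + ⟪g t, v - w t⟫ ≤ F v)
    (hgL : ∀ t ∈ Finset.Icc 1 T, ‖g t‖ ≤ L) :
    (1 / (T:ℝ)) * ∑ t ∈ Finset.Icc 1 T, (F (w t) - F wstar) ≤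
      (F (w 1) - F wstar) / (σ * a * (T:ℝ)) + a * L ^ 2 / 2 :=
  stmt_19_general σ a L hσ ha W hW F hsc wstar hwstar hmin proj hproj T hT z w g hw1 hz1 hz hwp hsub
    hgL
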